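/- arXiv:1911.09557 — 2 statements merged into one kernel-verified Lean document; each statement's English description precedes it below -/
import Mathlib

section
/- Let α' < α be real numbers and let f : ℝ^N × ℂ → ℂ be continuous with S_{f,M} := sup{ ⟨x⟩^α |f(x,u)| : x ∈ ℝ^N, |u| ≤ M } < ∞ for every M > 0. Then the substitution operator N_f(u)(x) = f(x,u(x)) maps L^∞(ℝ^N) into L^∞_{α'}(ℝ^N), is bounded on bounded sets, and is continuous as a map L^∞(ℝ^N) → L^∞_{α'}(ℝ^N). -/
/-!
Boundedness is immediate since `⟨x⟩^{α'} ≤ ⟨x⟩^α`. For continuity, the spare decay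
`⟨x⟩^{α'-α} → 0` makes `⟨x⟩^{α'} |f(x,u'(x)) - f(x,u(x))| ≤ 2 S ⟨x⟩^{α'-α}` small outside a
large ball `|x| ≤ R`, and on `closedBall 0 R × closedBall 0 (M + 1)` the continuous function
`⟨x⟩^{α'} f(x,u)` is uniformly continuous.
-/

open Filter Topology Metric

section Weight

lemma rpow_one_add_sq_le_rpow_of_le {s t : ℝ} (hst : s ≤ t) (r : ℝ) :
    (1 + r ^ 2) ^ (s / 2) ≤ (1 + r ^ 2) ^ (t / 2) :=
  Real.rpow_le_rpow_of_exponent_le (by nlinarith [sq_nonneg r]) (by linarith)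

lemma tendsto_rpow_one_add_sq_atTop_zero {β : ℝ} (hβ : β < 0) :
    Tendsto (fun r : ℝ => (1 + r ^ 2) ^ (β / 2)) atTop (𝓝 0) := by
  have h := (tendsto_rpow_neg_atTop (by linarith : 0 < -β / 2)).comp
    (tendsto_atTop_add_const_left atTop 1 (tendsto_pow_atTop two_ne_zero))
  simpa [Function.comp_def, neg_div] using h

lemma continuous_rpow_one_add_sq_norm {E : Type*} [SeminormedAddCommGroup E] (s : ℝ) :
    Continuous fun x : E => (1 + ‖x‖ ^ 2) ^ (s / 2) :=
  (by fun_prop : Continuous fun x : E => 1 + ‖x‖ ^ 2).rpow_const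
    fun x => Or.inl (by positivity)

end Weight

section Substitution

variable {E F G : Type*} [NormedAddCommGroup E] [NormedAddCommGroup F] [NormedAddCommGroup G]

lemma IsCompact.exists_pos_forall_dist_le_of_continuous [ProperSpace F] {K : Set E}
    (hK : IsCompact K) {g : E × F → G} (hg : Continuous g) (M : ℝ) {ε : ℝ} (hε : 0 < ε) :
    ∃ δ > 0, ∀ x ∈ K, ∀ u v : F, ‖u‖ ≤ M → ‖v - u‖ ≤ δ → dist (g (x, v)) (g (x, u)) ≤ ε := by
  obtain ⟨δ, hδ, hg_unif⟩ := uniformContinuousOn_iff_le.mp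
    ((hK.prod (isCompact_closedBall (0 : F) (M + 1))).uniformContinuousOn_of_continuous
      hg.continuousOn) ε hε
  refine ⟨min δ 1, by positivity, fun x hx u v hu hvu => hg_unif _ ?_ _ ?_ ?_⟩
  · refine ⟨hx, mem_closedBall_zero_iff.mpr ?_⟩
    calc ‖v‖ ≤ ‖v - u‖ + ‖u‖ := norm_le_norm_sub_add v u
      _ ≤ M + 1 := by linarith [min_le_right δ 1]
  · exact ⟨hx, mem_closedBall_zero_iff.mpr (by linarith)⟩
  · simpa [Prod.dist_eq, dist_eq_norm] using hvu.trans (min_le_left δ 1)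

lemma rpow_mul_norm_sub_le_of_bound {α α' M S : ℝ} {f : E × F → G}
    (hS : ∀ x u, ‖u‖ ≤ M → (1 + ‖x‖ ^ 2) ^ (α / 2) * ‖f (x, u)‖ ≤ S)
    (x : E) {u v : F} (hu : ‖u‖ ≤ M) (hv : ‖v‖ ≤ M) :
    (1 + ‖x‖ ^ 2) ^ (α' / 2) * ‖f (x, v) - f (x, u)‖ ≤
      (1 + ‖x‖ ^ 2) ^ ((α' - α) / 2) * (2 * S) := by
  have hpos : 0 < 1 + ‖x‖ ^ 2 := by positivity
  have hsplit : (1 + ‖x‖ ^ 2) ^ (α' / 2) =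
      (1 + ‖x‖ ^ 2) ^ ((α' - α) / 2) * (1 + ‖x‖ ^ 2) ^ (α / 2) := by
    rw [← Real.rpow_add hpos]; ring_nf
  have hinner : (1 + ‖x‖ ^ 2) ^ (α / 2) * ‖f (x, v) - f (x, u)‖ ≤ 2 * S := by
    have := mul_le_mul_of_nonneg_left (norm_sub_le (f (x, v)) (f (x, u)))
      (Real.rpow_nonneg hpos.le (α / 2))
    linarith [hS x v hv, hS x u hu]
  rw [hsplit, mul_assoc]
  exact mul_le_mul_of_nonneg_left hinner (Real.rpow_nonneg hpos.le _)

lemma exists_pos_forall_rpow_mul_norm_sub_le [ProperSpace E] [ProperSpace F] [NormedSpace ℝ G]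
    {α α' : ℝ} (hαα' : α' < α) {f : E × F → G} (hf : Continuous f)
    (hS : ∀ M > (0 : ℝ), ∃ S : ℝ, ∀ x u, ‖u‖ ≤ M → (1 + ‖x‖ ^ 2) ^ (α / 2) * ‖f (x, u)‖ ≤ S)
    {u : E → F} {M : ℝ} (hu : ∀ x, ‖u x‖ ≤ M) {ε : ℝ} (hε : 0 < ε) :
    ∃ δ > (0 : ℝ), ∀ u' : E → F, (∀ x, ‖u' x - u x‖ ≤ δ) →
      ∀ x, (1 + ‖x‖ ^ 2) ^ (α' / 2) * ‖f (x, u' x) - f (x, u x)‖ ≤ ε := by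
  obtain ⟨S, hSb⟩ := hS (|M| + 1) (by positivity)
  obtain ⟨R, hR⟩ := eventually_atTop.mp <|
    ((tendsto_rpow_one_add_sq_atTop_zero (sub_neg.mpr hαα')).mul_const (2 * S)).eventually
      (ge_mem_nhds (by simpa using hε))
  have hg : Continuous fun p : E × F => (1 + ‖p.1‖ ^ 2) ^ (α' / 2) • f p :=
    ((continuous_rpow_one_add_sq_norm α').comp continuous_fst).smul hf
  obtain ⟨δ, hδ, hclose⟩ :=
    (isCompact_closedBall (0 : E) R).exists_pos_forall_dist_le_of_continuous hg M hε
  refine ⟨min δ 1, by positivity, fun u' hu' x => ?_⟩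
  by_cases hx : ‖x‖ ≤ R
  · have := hclose x (mem_closedBall_zero_iff.mpr hx) (u x) (u' x) (hu x)
      ((hu' x).trans (min_le_left δ 1))
    rwa [dist_eq_norm, ← smul_sub, norm_smul, Real.norm_of_nonneg (by positivity)] at this
  · have hu_le : ‖u x‖ ≤ |M| + 1 := by linarith [hu x, le_abs_self M]
    have hu'_le : ‖u' x‖ ≤ |M| + 1 := by
      linarith [norm_le_norm_sub_add (u' x) (u x), hu' x, min_le_right δ 1, hu x, le_abs_self M]
    exact (rpow_mul_norm_sub_le_of_bound hSb x hu_le hu'_le).trans (hR ‖x‖ (not_le.mp hx).le)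

end Substitution

/-- Lemma 3.1: the substitution operator `N_f(u)(x) = f(x, u(x))` maps `L^∞(ℝ^N)` into
`L^∞_{α'}(ℝ^N)` for `α' < α`, is bounded on bounded sets, and is continuous. -/
theorem stmt_5 (N : ℕ) (α α' : ℝ) (hαα' : α' < α)
    (f : EuclideanSpace ℝ (Fin N) × ℂ → ℂ) (hf : Continuous f)
    (hS : ∀ M > (0 : ℝ), ∃ S : ℝ, ∀ (x : EuclideanSpace ℝ (Fin N)) (u : ℂ),
      ‖u‖ ≤ M → (1 + ‖x‖ ^ 2) ^ (α / 2) * ‖f (x, u)‖ ≤ S) :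
    (∀ M > (0 : ℝ), ∃ S : ℝ, ∀ u : EuclideanSpace ℝ (Fin N) → ℂ,
      (∀ x, ‖u x‖ ≤ M) →
      ∀ x, (1 + ‖x‖ ^ 2) ^ (α' / 2) * ‖f (x, u x)‖ ≤ S) ∧
    (∀ (u : EuclideanSpace ℝ (Fin N) → ℂ) (M : ℝ), (∀ x, ‖u x‖ ≤ M) →
      ∀ ε > (0 : ℝ), ∃ δ > (0 : ℝ), ∀ u' : EuclideanSpace ℝ (Fin N) → ℂ,
        (∀ x, ‖u' x - u x‖ ≤ δ) →
        ∀ x, (1 + ‖x‖ ^ 2) ^ (α' / 2) * ‖f (x, u' x) - f (x, u x)‖ ≤ ε) := by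
  refine ⟨fun M hM => ?_, fun u M hu ε hε =>
    exists_pos_forall_rpow_mul_norm_sub_le hαα' hf hS hu hε⟩
  obtain ⟨S, hSb⟩ := hS M hM
  exact ⟨S, fun u hu x => (mul_le_mul_of_nonneg_right
    (rpow_one_add_sq_le_rpow_of_le hαα'.le ‖x‖) (norm_nonneg _)).trans (hSb x (u x) (hu x))⟩
end

section
/- Let α' < α and let f : ℝ^N × ℂ → ℂ be continuous with f(x,·) real-differentiable for every x, with continuous derivative f' = ∂_u f : ℝ^N × ℂ → L_ℝ(ℂ,ℂ) satisfying T_{f,M} := sup{ ⟨x⟩^α ‖f'(x,u)‖ : x ∈ ℝ^N, |u| ≤ M } < ∞ for every M > 0, and sup_{|u|≤M,x} ⟨x⟩^α |f(x,u)| < ∞ for every M. Then the substitution operator N_f : L^∞(ℝ^N) → L^∞_{α'}(ℝ^N) is continuously Fréchet differentiable, with derivative N_f'(u)v (x) = f'(x,u(x)) v(x). -/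
/-!
The derivative `f'` is uniformly continuous in `u` on `ℝ^N × B̄_M` once weighted by `⟨x⟩^{α'}`:
since `α' < α`, the weighted function `⟨x⟩^{α'} f'(x, u)` is bounded by `⟨x⟩^{α' - α} T` and so
tends to zero at infinity on `ℝ^N × B̄_M`, and a continuous function vanishing at infinity is
uniformly continuous. Continuity of `u ↦ f'(·, u(·))` in operator norm is then immediate, and
the mean value inequality turns the same modulus of continuity into the `o(‖w‖_∞)` bound on
the remainder `f(x, u + w) - f(x, u) - f'(x, u) w`.
-/

open Filter Topology Metric

section WeightedUniformContinuity

variable {E G : Type*} [NormedAddCommGroup E] [ProperSpace E]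
  [NormedAddCommGroup G] [NormedSpace ℝ G]

lemma tendsto_one_add_norm_sq_rpow_cocompact {s : ℝ} (hs : s < 0) :
    Tendsto (fun x : E => (1 + ‖x‖ ^ 2) ^ s) (cocompact E) (𝓝 0) := by
  have h : Tendsto (fun r : ℝ => 1 + r ^ 2) atTop atTop :=
    tendsto_atTop_add_const_left _ 1 (tendsto_pow_atTop two_ne_zero)
  simpa [Function.comp_def] using
    ((tendsto_rpow_neg_atTop (neg_pos.2 hs)).comp h).comp tendsto_norm_cocompact_atTop

lemma tendsto_weight_smul_cocompact {F : Type*} [TopologicalSpace F] {α α' : ℝ} (hα : α' < α)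
    {g : E → F → G} {K : Set F} (hK : IsCompact K) {T : ℝ}
    (hT : ∀ x, ∀ a ∈ K, (1 + ‖x‖ ^ 2) ^ (α / 2) * ‖g x a‖ ≤ T) :
    Tendsto (fun p : E × K => (1 + ‖p.1‖ ^ 2) ^ (α' / 2) • g p.1 p.2) (cocompact (E × K))
      (𝓝 0) := by
  have : CompactSpace K := isCompact_iff_compactSpace.1 hK
  -- `K` being compact, tending to infinity in `E × K` means `‖x‖ → ∞`.
  rw [← Filter.coprod_cocompact, cocompact_eq_bot (X := K), coprod_bot]
  refine squeeze_zero_norm (a := fun p => (1 + ‖p.1‖ ^ 2) ^ ((α' - α) / 2) * T) (fun p => ?_) ?_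
  · have hsplit : (1 + ‖p.1‖ ^ 2) ^ (α' / 2)
        = (1 + ‖p.1‖ ^ 2) ^ ((α' - α) / 2) * (1 + ‖p.1‖ ^ 2) ^ (α / 2) := by
      rw [← Real.rpow_add (by positivity)]
      ring_nf
    rw [norm_smul, Real.norm_of_nonneg (by positivity), hsplit, mul_assoc]
    gcongr
    exact hT p.1 p.2 p.2.2
  · simpa using
      ((tendsto_one_add_norm_sq_rpow_cocompact (by linarith)).comp tendsto_comap).mul_const T

lemma uniformContinuous_weight_smul {F : Type*} [UniformSpace F] {α α' : ℝ} (hα : α' < α)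
    {g : E → F → G} (hg : Continuous fun p : E × F => g p.1 p.2) {K : Set F} (hK : IsCompact K)
    {T : ℝ} (hT : ∀ x, ∀ a ∈ K, (1 + ‖x‖ ^ 2) ^ (α / 2) * ‖g x a‖ ≤ T) :
    UniformContinuous fun p : E × K => (1 + ‖p.1‖ ^ 2) ^ (α' / 2) • g p.1 p.2 := by
  have hweight : Continuous fun p : E × K => (1 + ‖p.1‖ ^ 2) ^ (α' / 2) :=
    (continuous_const.add (continuous_fst.norm.pow 2)).rpow_const fun p =>
      Or.inl (show (1 : ℝ) + ‖p.1‖ ^ 2 ≠ 0 by positivity)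
  have hgK : Continuous fun p : E × K => g p.1 p.2 :=
    hg.comp (continuous_fst.prodMk (continuous_subtype_val.comp continuous_snd))
  exact (hweight.smul hgK).uniformContinuous_of_tendsto_cocompact
    (tendsto_weight_smul_cocompact hα hK hT)

lemma exists_weight_mul_norm_sub_le {F : Type*} [NormedAddCommGroup F] [ProperSpace F]
    {α α' : ℝ} (hα : α' < α) {g : E → F → G} (hg : Continuous fun p : E × F => g p.1 p.2)
    {M T : ℝ} (hT : ∀ x a, ‖a‖ ≤ M → (1 + ‖x‖ ^ 2) ^ (α / 2) * ‖g x a‖ ≤ T)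
    {ε : ℝ} (hε : 0 < ε) :
    ∃ δ > 0, ∀ x a b, ‖a‖ ≤ M → ‖b‖ ≤ M → ‖a - b‖ ≤ δ →
      (1 + ‖x‖ ^ 2) ^ (α' / 2) * ‖g x a - g x b‖ ≤ ε := by
  have hTK : ∀ x, ∀ a ∈ closedBall (0 : F) M, (1 + ‖x‖ ^ 2) ^ (α / 2) * ‖g x a‖ ≤ T :=
    fun x a ha => hT x a (mem_closedBall_zero_iff.1 ha)
  obtain ⟨δ, hδ, hδε⟩ := Metric.uniformContinuous_iff.1
    (uniformContinuous_weight_smul hα hg (isCompact_closedBall 0 M) hTK) ε hε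
  refine ⟨δ / 2, half_pos hδ, fun x a b ha hb hab => ?_⟩
  have hclose := @hδε (x, ⟨a, mem_closedBall_zero_iff.2 ha⟩)
    (x, ⟨b, mem_closedBall_zero_iff.2 hb⟩)
    (by simp only [Prod.dist_eq, dist_self, Subtype.dist_eq, dist_eq_norm, norm_nonneg,
      sup_of_le_right]; linarith)
  rw [dist_eq_norm, ← smul_sub, norm_smul, Real.norm_of_nonneg (by positivity)] at hclose
  exact hclose.le

end WeightedUniformContinuity

section WeightedDerivative

variable {E F : Type*} [NormedAddCommGroup E] [NormedSpace ℝ E] [NormedAddCommGroup F]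
  [NormedSpace ℝ F] {W ε : ℝ}

lemma mul_norm_sub_sub_fderiv_le {f : E → F} {f' : E → E →L[ℝ] F}
    (hf : ∀ z, HasFDerivAt f (f' z) z) (hW : 0 < W) {u w : E} {η : ℝ} (hw : ‖w‖ ≤ η)
    (hf' : ∀ z, ‖z - u‖ ≤ η → W * ‖f' z - f' u‖ ≤ ε) :
    W * ‖f (u + w) - f u - f' u w‖ ≤ ε * η := by
  have hrem := (convex_closedBall u η).norm_image_sub_le_of_norm_hasFDerivWithin_le'
    (fun z _ => (hf z).hasFDerivWithinAt)
    (fun z hz => (le_div_iff₀' hW).2 (hf' z (mem_closedBall_iff_norm.1 hz)))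
    (mem_closedBall_self ((norm_nonneg w).trans hw)) (y := u + w) (by simpa using hw)
  rw [add_sub_cancel_left] at hrem
  have hε : 0 ≤ ε := by simpa using (hf' u (by simpa using (norm_nonneg w).trans hw))
  calc W * ‖f (u + w) - f u - f' u w‖ ≤ W * (ε / W * ‖w‖) := by gcongr
    _ = ε * ‖w‖ := by field_simp
    _ ≤ ε * η := by gcongr

lemma mul_norm_apply_sub_apply_le (hW : 0 ≤ W) {A B : E →L[ℝ] F} (hAB : W * ‖A - B‖ ≤ ε) (v : E) :
    W * ‖A v - B v‖ ≤ ε * ‖v‖ :=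
  calc W * ‖(A - B) v‖ ≤ W * (‖A - B‖ * ‖v‖) := by gcongr; exact (A - B).le_opNorm v
    _ = W * ‖A - B‖ * ‖v‖ := by ring
    _ ≤ ε * ‖v‖ := by gcongr

end WeightedDerivative

theorem stmt_6_general (N : ℕ) (α α' : ℝ) (hαα' : α' < α)
    (f : EuclideanSpace ℝ (Fin N) → ℂ → ℂ)
    (f' : EuclideanSpace ℝ (Fin N) → ℂ → (ℂ →L[ℝ] ℂ))
    (hf' : Continuous fun p : EuclideanSpace ℝ (Fin N) × ℂ => f' p.1 p.2)
    (hderiv : ∀ (x : EuclideanSpace ℝ (Fin N)) (u : ℂ), HasFDerivAt (f x) (f' x u) u)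
    (hT : ∀ M > (0 : ℝ), ∃ T : ℝ, ∀ (x : EuclideanSpace ℝ (Fin N)) (u : ℂ),
      ‖u‖ ≤ M → (1 + ‖x‖ ^ 2) ^ (α / 2) * ‖f' x u‖ ≤ T) :
    (∀ (u : EuclideanSpace ℝ (Fin N) → ℂ) (M : ℝ), (∀ x, ‖u x‖ ≤ M) →
      ∀ ε > (0 : ℝ), ∃ δ > (0 : ℝ), ∀ (w : EuclideanSpace ℝ (Fin N) → ℂ) (η : ℝ),
        0 ≤ η → η ≤ δ → (∀ x, ‖w x‖ ≤ η) →
        ∀ x, (1 + ‖x‖ ^ 2) ^ (α' / 2) *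
          ‖f x (u x + w x) - f x (u x) - f' x (u x) (w x)‖ ≤ ε * η) ∧
    (∀ (u : EuclideanSpace ℝ (Fin N) → ℂ) (M : ℝ), (∀ x, ‖u x‖ ≤ M) →
      ∀ ε > (0 : ℝ), ∃ δ > (0 : ℝ), ∀ u' : EuclideanSpace ℝ (Fin N) → ℂ,
        (∀ x, ‖u' x - u x‖ ≤ δ) →
        ∀ (x : EuclideanSpace ℝ (Fin N)) (v : ℂ),
          (1 + ‖x‖ ^ 2) ^ (α' / 2) * ‖f' x (u' x) v - f' x (u x) v‖ ≤
            ε * ‖v‖) := by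
  have modulus : ∀ (u : EuclideanSpace ℝ (Fin N) → ℂ) (M : ℝ), (∀ x, ‖u x‖ ≤ M) →
      ∀ ε > (0 : ℝ), ∃ δ > (0 : ℝ), ∀ x a, ‖a - u x‖ ≤ δ →
        (1 + ‖x‖ ^ 2) ^ (α' / 2) * ‖f' x a - f' x (u x)‖ ≤ ε := by
    intro u M hu ε hε
    obtain ⟨T, hT⟩ := hT (M + 1) (by linarith [(norm_nonneg _).trans (hu 0)])
    obtain ⟨δ, hδ, hδε⟩ := exists_weight_mul_norm_sub_le hαα' hf' hT hε
    refine ⟨min δ 1, by positivity, fun x a ha => hδε x a (u x) ?_ (by linarith [hu x])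
      (ha.trans (min_le_left _ _))⟩
    linarith [norm_le_norm_add_norm_sub' a (u x), hu x, min_le_right δ 1]
  refine ⟨fun u M hu ε hε => ?_, fun u M hu ε hε => ?_⟩
  · obtain ⟨δ, hδ, hδε⟩ := modulus u M hu ε hε
    exact ⟨δ, hδ, fun w η _ hηδ hw x =>
      mul_norm_sub_sub_fderiv_le (hderiv x) (by positivity) (hw x)
        fun z hz => hδε x z (hz.trans hηδ)⟩
  · obtain ⟨δ, hδ, hδε⟩ := modulus u M hu ε hε
    exact ⟨δ, hδ, fun u' hu' x =>
      mul_norm_apply_sub_apply_le (by positivity) (hδε x (u' x) (hu' x))⟩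

/-- Lemma 3.2: under weighted bounds on `f` and its derivative `f' = ∂_u f`, the
substitution operator `N_f : L^∞(ℝ^N) → L^∞_{α'}(ℝ^N)` is continuously Fréchet
differentiable with `(N_f'(u)v)(x) = f'(x, u(x)) v(x)`.  The first conclusion expresses
Fréchet differentiability at each `u ∈ L^∞` (remainder `o(‖w‖_∞)` in the `L^∞_{α'}`
norm), the second expresses continuity of `u ↦ N_{f'}(u)` in the operator norm. -/
theorem stmt_6 (N : ℕ) (α α' : ℝ) (hαα' : α' < α)
    (f : EuclideanSpace ℝ (Fin N) → ℂ → ℂ)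
    (f' : EuclideanSpace ℝ (Fin N) → ℂ → (ℂ →L[ℝ] ℂ))
    (hf : Continuous fun p : EuclideanSpace ℝ (Fin N) × ℂ => f p.1 p.2)
    (hf' : Continuous fun p : EuclideanSpace ℝ (Fin N) × ℂ => f' p.1 p.2)
    (hderiv : ∀ (x : EuclideanSpace ℝ (Fin N)) (u : ℂ), HasFDerivAt (f x) (f' x u) u)
    (hS : ∀ M > (0 : ℝ), ∃ S : ℝ, ∀ (x : EuclideanSpace ℝ (Fin N)) (u : ℂ),
      ‖u‖ ≤ M → (1 + ‖x‖ ^ 2) ^ (α / 2) * ‖f x u‖ ≤ S)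
    (hT : ∀ M > (0 : ℝ), ∃ T : ℝ, ∀ (x : EuclideanSpace ℝ (Fin N)) (u : ℂ),
      ‖u‖ ≤ M → (1 + ‖x‖ ^ 2) ^ (α / 2) * ‖f' x u‖ ≤ T) :
    (∀ (u : EuclideanSpace ℝ (Fin N) → ℂ) (M : ℝ), (∀ x, ‖u x‖ ≤ M) →
      ∀ ε > (0 : ℝ), ∃ δ > (0 : ℝ), ∀ (w : EuclideanSpace ℝ (Fin N) → ℂ) (η : ℝ),
        0 ≤ η → η ≤ δ → (∀ x, ‖w x‖ ≤ η) →
        ∀ x, (1 + ‖x‖ ^ 2) ^ (α' / 2) *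
          ‖f x (u x + w x) - f x (u x) - f' x (u x) (w x)‖ ≤ ε * η) ∧
    (∀ (u : EuclideanSpace ℝ (Fin N) → ℂ) (M : ℝ), (∀ x, ‖u x‖ ≤ M) →
      ∀ ε > (0 : ℝ), ∃ δ > (0 : ℝ), ∀ u' : EuclideanSpace ℝ (Fin N) → ℂ,
        (∀ x, ‖u' x - u x‖ ≤ δ) →
        ∀ (x : EuclideanSpace ℝ (Fin N)) (v : ℂ),
          (1 + ‖x‖ ^ 2) ^ (α' / 2) * ‖f' x (u' x) v - f' x (u x) v‖ ≤
            ε * ‖v‖) :=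
  stmt_6_general N α α' hαα' f f' hf' hderiv hT
end
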